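/- If f = χ_B (the indicator of the open unit ball B in ℝ^d) then the Legendre quadratic form vanishes: the distributional Legendre operator applied to χ_B is 0, i.e., ∇·((1-|x|²)∇χ_B) = 0 as a distribution, so the Legendre entropy of χ_B is zero and the wave-packet entropy lower bound S ≥ 2πD‖f‖²_B is attained with S = 2πD·Vol(B), D = (d-1)/2. -/

import Mathlib

open MeasureTheory Filter Topology
noncomputable section

/-- Euclidean space ℝ^d. -/
abbrev Ed (d : ℕ) := EuclideanSpace ℝ (Fin d)

/-- Partial derivative ∂ᵢ of a complex-valued function. -/
def pd {d : ℕ} (i : Fin d) (f : Ed d → ℂ) (x : Ed d) : ℂ :=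
  fderiv ℝ f x (EuclideanSpace.single i 1)

/-- Laplacian Δ = ∑ᵢ ∂ᵢ². -/
def lap {d : ℕ} (f : Ed d → ℂ) (x : Ed d) : ℂ := ∑ i, pd i (pd i f) x

/-- Radial derivative r∂ᵣ = ∑ᵢ xᵢ ∂ᵢ. -/
def rdr {d : ℕ} (f : Ed d → ℂ) (x : Ed d) : ℂ := ∑ i, (x i : ℂ) * pd i f x

/-- Legendre operator L f = ∇·((1-|x|²)∇f). -/
def legendreOp {d : ℕ} (f : Ed d → ℂ) (x : Ed d) : ℂ :=
  ∑ i, pd i (fun y => ((1 - ‖y‖ ^ 2 : ℝ) : ℂ) * pd i f y) x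

/-- Prolate operator W f = L f - |x|² f. -/
def prolateOp {d : ℕ} (f : Ed d → ℂ) (x : Ed d) : ℂ :=
  legendreOp f x - ((‖x‖ ^ 2 : ℝ) : ℂ) * f x

/-- Partial derivative ∂ᵢ of a real-valued function. -/
def pdR {d : ℕ} (i : Fin d) (f : Ed d → ℝ) (x : Ed d) : ℝ :=
  fderiv ℝ f x (EuclideanSpace.single i 1)

/-- Legendre operator on real functions. -/
def legendreR {d : ℕ} (f : Ed d → ℝ) (x : Ed d) : ℝ :=
  ∑ i, pdR i (fun y => (1 - ‖y‖ ^ 2) * pdR i f y) x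


set_option maxHeartbeats 1000000

section LegendreAux
open Asymptotics
variable {d : ℕ}


def phi (x : Ed d) : ℝ := max (1 - ‖x‖^2) 0
def uu (x : Ed d) : ℝ := (phi x)^2

lemma phi_nonneg (x : Ed d) : 0 ≤ phi x := le_max_right _ _
lemma phi_le_one (x : Ed d) : phi x ≤ 1 := by
  apply max_le (by nlinarith [sq_nonneg ‖x‖]) zero_le_one
lemma phi_eq_zero {x : Ed d} (h : 1 ≤ ‖x‖) : phi x = 0 := by
  apply max_eq_right; nlinarith
lemma phi_eq_of_lt {x : Ed d} (h : ‖x‖ ≤ 1) : phi x = 1 - ‖x‖^2 := by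
  apply max_eq_left; nlinarith [norm_nonneg x]
lemma continuous_phi : Continuous (phi (d := d)) := by
  apply Continuous.max _ continuous_const
  exact continuous_const.sub (continuous_norm.pow 2)
lemma continuous_uu : Continuous (uu (d := d)) := continuous_phi.pow 2
lemma uu_nonneg (x : Ed d) : 0 ≤ uu x := sq_nonneg _
lemma uu_le_one (x : Ed d) : uu x ≤ 1 := by
  unfold uu; nlinarith [phi_le_one x, phi_nonneg x]

lemma hasFDerivAt_uu (x : Ed d) :
    HasFDerivAt uu ((-4 * phi x) • (innerSL ℝ x : Ed d →L[ℝ] ℝ)) x := by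
  rcases lt_trichotomy ‖x‖ 1 with hx | hx | hx
  · have hw : HasFDerivAt (fun y : Ed d => 1 - ‖y‖^2) (-(2 • innerSL ℝ x)) x :=
      (hasStrictFDerivAt_norm_sq x).hasFDerivAt.const_sub 1
    have h2 := hw.mul hw
    have hev : (fun y : Ed d => (1 - ‖y‖^2) * (1 - ‖y‖^2)) =ᶠ[𝓝 x] uu := by
      have : ∀ᶠ y in 𝓝 x, ‖y‖ < 1 :=
        (isOpen_lt continuous_norm continuous_const).eventually_mem hx
      filter_upwards [this] with y hy
      simp [uu, phi_eq_of_lt hy.le]; ring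
    have h3 := h2.congr_of_eventuallyEq hev.symm
    refine h3.congr_fderiv ?_
    ext v
    simp [phi_eq_of_lt hx.le, real_inner_smul_left]
    ring
  · have hphi : phi x = 0 := phi_eq_zero hx.ge
    rw [hasFDerivAt_iff_isLittleO_nhds_zero]
    have huu : uu x = 0 := by simp [uu, hphi]
    simp only [huu, hphi, neg_mul, mul_zero, neg_zero, zero_smul,
      ContinuousLinearMap.zero_apply, sub_zero]
    rw [isLittleO_iff]
    intro c hc
    filter_upwards [Metric.ball_mem_nhds (0 : Ed d) (show (0:ℝ) < min 1 (c/9) by positivity)]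
      with h hh
    rw [mem_ball_zero_iff] at hh
    have hh1 : ‖h‖ < 1 := lt_of_lt_of_le hh (min_le_left _ _)
    have hh2 : ‖h‖ < c/9 := lt_of_lt_of_le hh (min_le_right _ _)
    have hb : |‖x + h‖ - ‖x‖| ≤ ‖h‖ := by
      simpa using abs_norm_sub_norm_le (x + h) x
    rw [hx] at hb
    obtain ⟨hb1, hb2⟩ := abs_le.1 hb
    have hp : phi (x + h) ≤ |1 - ‖x + h‖^2| :=
      max_le (le_abs_self _) (abs_nonneg _)
    have hpn := phi_nonneg (x + h)
    have hN := norm_nonneg (x + h)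
    have h3 : phi (x + h) ≤ 3 * ‖h‖ := by
      refine le_trans hp (abs_le.2 ⟨?_, ?_⟩) <;> nlinarith
    have hhn := norm_nonneg h
    have : ‖uu (x + h)‖ ≤ c * ‖h‖ := by
      rw [Real.norm_eq_abs, abs_of_nonneg (sq_nonneg _)]
      show (phi (x+h))^2 ≤ c * ‖h‖
      nlinarith
    simpa using this
  · have hphi : phi x = 0 := phi_eq_zero hx.le
    have hev : (fun _ : Ed d => (0:ℝ)) =ᶠ[𝓝 x] uu := by
      have : ∀ᶠ y in 𝓝 x, 1 < ‖y‖ :=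
        (isOpen_lt continuous_const continuous_norm).eventually_mem hx
      filter_upwards [this] with y hy
      simp [uu, phi_eq_zero hy.le]
    have h0 : HasFDerivAt (fun _ : Ed d => (0:ℝ)) (0 : Ed d →L[ℝ] ℝ) x := hasFDerivAt_const 0 x
    have h3 := h0.congr_of_eventuallyEq hev.symm
    refine h3.congr_fderiv ?_
    simp [hphi]

def psi (t : ℝ) (x : Ed d) : ℝ := uu x / (uu x + t^2)

lemma denom_pos {t : ℝ} (ht : t ≠ 0) (x : Ed d) : 0 < uu x + t^2 := by
  have := uu_nonneg x; have : 0 < t^2 := by positivity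
  linarith [uu_nonneg x]

lemma psi_nonneg {t : ℝ} (ht : t ≠ 0) (x : Ed d) : 0 ≤ psi t x :=
  div_nonneg (uu_nonneg x) (denom_pos ht x).le

lemma psi_le_one {t : ℝ} (ht : t ≠ 0) (x : Ed d) : psi t x ≤ 1 := by
  rw [psi, div_le_one (denom_pos ht x)]
  nlinarith [uu_nonneg x, sq_nonneg t]

lemma continuous_psi {t : ℝ} (ht : t ≠ 0) : Continuous (psi (d := d) t) :=
  continuous_uu.div (continuous_uu.add continuous_const) (fun x => (denom_pos ht x).ne')

def psi' (t : ℝ) (x : Ed d) : ℝ := t^2/(uu x + t^2)^2 * (-4 * phi x)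

lemma hasFDerivAt_psi {t : ℝ} (ht : t ≠ 0) (x : Ed d) :
    HasFDerivAt (psi t) ((psi' t x) • (innerSL ℝ x : Ed d →L[ℝ] ℝ)) x := by
  have hne : uu x + t^2 ≠ 0 := (denom_pos ht x).ne'
  set Du := ((-4 * phi x) • (innerSL ℝ x : Ed d →L[ℝ] ℝ)) with hDu
  have hden : HasFDerivAt (fun y : Ed d => uu y + t^2) Du x :=
    (hasFDerivAt_uu x).add_const _
  have hinv : HasFDerivAt (fun y : Ed d => (uu y + t^2)⁻¹)
      ((-((uu x + t^2)^2)⁻¹) • Du) x :=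
    (hasDerivAt_inv hne).comp_hasFDerivAt x hden
  have hmul := (hasFDerivAt_uu x).mul hinv
  have hfun : (fun y : Ed d => uu y * (uu y + t^2)⁻¹) = psi t := by
    funext y; rw [psi, div_eq_mul_inv]
  rw [show (uu * fun y : Ed d => (uu y + t^2)⁻¹) = psi t from hfun] at hmul
  refine hmul.congr_fderiv ?_
  symm
  ext v
  simp only [psi', hDu, ContinuousLinearMap.smul_apply, ContinuousLinearMap.add_apply,
    smul_eq_mul]
  field_simp
  ring

lemma abs_coord_le (i : Fin d) (x : Ed d) : |x i| ≤ ‖x‖ := by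
  have h := abs_real_inner_le_norm x (EuclideanSpace.single i (1:ℝ))
  simpa [EuclideanSpace.inner_single_right, EuclideanSpace.norm_single] using h

lemma phi_mul_norm_le_one (x : Ed d) : phi x * ‖x‖ ≤ 1 := by
  rcases le_or_gt ‖x‖ 1 with h | h
  · nlinarith [phi_le_one x, phi_nonneg x, norm_nonneg x]
  · simp [phi_eq_zero h.le]

lemma phi_mul_abs_w (x : Ed d) : phi x * |1 - ‖x‖^2| = uu x := by
  rcases le_or_gt ‖x‖ 1 with h | h
  · rw [abs_of_nonneg (by nlinarith [norm_nonneg x] : (0:ℝ) ≤ 1 - ‖x‖^2), uu, phi_eq_of_lt h]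
    ring
  · simp [phi_eq_zero h.le, uu]

lemma abs_psi' {t : ℝ} (ht : t ≠ 0) (x : Ed d) :
    |psi' t x| = t^2/(uu x + t^2)^2 * (4 * phi x) := by
  have hd := denom_pos ht x
  rw [psi', abs_mul, abs_of_nonneg (by positivity),
    abs_of_nonpos (by nlinarith [phi_nonneg x] : -4 * phi x ≤ 0)]
  ring

lemma psi'_bound1 {t : ℝ} (ht : t ≠ 0) (x : Ed d) (i : Fin d) :
    |psi' t x * x i| ≤ 4 / t^2 := by
  have hd := denom_pos ht x
  have ht2 : (0:ℝ) < t^2 := by positivity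
  have h1 : (t^2)^2 ≤ (uu x + t^2)^2 := by nlinarith [uu_nonneg x]
  rw [abs_mul, abs_psi' ht]
  have h2 : t^2/(uu x + t^2)^2 ≤ 1/t^2 := by
    rw [div_le_div_iff₀ (by positivity) ht2]; nlinarith
  calc t^2/(uu x + t^2)^2 * (4 * phi x) * |x i|
      ≤ 1/t^2 * (4 * phi x) * ‖x‖ := by
        apply mul_le_mul (mul_le_mul_of_nonneg_right h2 (by nlinarith [phi_nonneg x]))
          (abs_coord_le i x) (abs_nonneg _)
        have := phi_nonneg x
        positivity
    _ = 4/t^2 * (phi x * ‖x‖) := by ring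
    _ ≤ 4/t^2 * 1 := by
        apply mul_le_mul_of_nonneg_left (phi_mul_norm_le_one x) (by positivity)
    _ = 4/t^2 := by ring

lemma psi'_w_bound {t : ℝ} (ht : t ≠ 0) (x : Ed d) :
    |psi' t x| * |1 - ‖x‖^2| ≤ 1 := by
  have hd := denom_pos ht x
  have ht2 : (0:ℝ) < t^2 := by positivity
  rw [abs_psi' ht]
  have : t^2/(uu x + t^2)^2 * (4 * phi x) * |1 - ‖x‖^2|
      = 4 * (uu x * t^2) / (uu x + t^2)^2 := by
    rw [← phi_mul_abs_w x]; ring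
  rw [this, div_le_one (by positivity)]
  nlinarith [sq_nonneg (uu x - t^2), uu_nonneg x]

theorem key (g : SchwartzMap (Ed d) ℝ) (i : Fin d) :
    Integrable (fun x : Ed d => (Metric.ball (0 : Ed d) 1).indicator (fun _ => (1 : ℝ)) x *
      fderiv ℝ (fun y => (1 - ‖y‖ ^ 2) * fderiv ℝ (⇑g) y (EuclideanSpace.single i 1)) x
        (EuclideanSpace.single i 1)) volume ∧
    ∫ x : Ed d, (Metric.ball (0 : Ed d) 1).indicator (fun _ => (1 : ℝ)) x *
      fderiv ℝ (fun y => (1 - ‖y‖ ^ 2) * fderiv ℝ (⇑g) y (EuclideanSpace.single i 1)) x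
        (EuclideanSpace.single i 1) = 0 := by
  classical
  set e : Ed d := EuclideanSpace.single i 1 with he
  set H1 : SchwartzMap (Ed d) ℝ :=
    SchwartzMap.evalCLM ℝ (Ed d) ℝ e (SchwartzMap.fderivCLM ℝ (Ed d) ℝ g) with hH1def
  have hH1 : ∀ y, H1 y = fderiv ℝ (⇑g) y e := fun _ => rfl
  set H2 : SchwartzMap (Ed d) ℝ :=
    SchwartzMap.evalCLM ℝ (Ed d) ℝ e (SchwartzMap.fderivCLM ℝ (Ed d) ℝ H1) with hH2def
  have hH2 : ∀ y, H2 y = fderiv ℝ (⇑H1) y e := fun _ => rfl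
  set F : Ed d → ℝ := fun y => (1 - ‖y‖ ^ 2) * fderiv ℝ (⇑g) y e with hFdef
  have hFeq : F = fun y => (1 - ‖y‖^2) * H1 y := by funext y; rw [hH1]
  set F' : Ed d → ℝ := fun x => (1 - ‖x‖^2) * H2 x - 2 * x i * H1 x with hF'def
  -- derivative of F
  have hFd : ∀ x : Ed d, HasFDerivAt F
      ((1 - ‖x‖^2) • fderiv ℝ (⇑H1) x + (H1 x) • (-(2 • innerSL ℝ x))) x := by
    intro x
    rw [hFeq]
    exact ((hasStrictFDerivAt_norm_sq x).hasFDerivAt.const_sub 1).mul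
      (H1.differentiable x).hasFDerivAt
  have hinner : ∀ x : Ed d, (innerSL ℝ x) e = x i := by
    intro x; simp [he, EuclideanSpace.inner_single_right]
  have hF'val : ∀ x : Ed d, fderiv ℝ F x e = F' x := by
    intro x
    rw [(hFd x).fderiv]
    simp only [ContinuousLinearMap.add_apply, ContinuousLinearMap.smul_apply,
      ContinuousLinearMap.neg_apply, smul_eq_mul, hinner x, ← hH2 x]
    simp [hF'def]; ring
  have hFdiff : Differentiable ℝ F := fun x => (hFd x).differentiableAt
  -- integrability facts
  have ha : ∀ f : SchwartzMap (Ed d) ℝ, Integrable (fun x : Ed d => (1+‖x‖^2) * ‖f x‖) := by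
    intro f
    have h0 := (f.integrable (μ := volume)).norm
    have h2 := f.integrable_pow_mul (volume) 2
    refine (h0.add h2).congr (Filter.Eventually.of_forall fun x => ?_)
    simp [add_mul, one_mul]
  have hwbd : ∀ x : Ed d, |1 - ‖x‖^2| ≤ 1 + ‖x‖^2 := by
    intro x
    rw [abs_le]; constructor <;> nlinarith [sq_nonneg ‖x‖]
  have hFcont : Continuous F := by
    rw [hFeq]; exact (continuous_const.sub (continuous_norm.pow 2)).mul H1.continuous
  have hIF : Integrable F := by
    apply (ha H1).mono' hFcont.aestronglyMeasurable
    filter_upwards with x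
    rw [hFeq]
    rw [Real.norm_eq_abs, abs_mul]
    exact mul_le_mul_of_nonneg_right (hwbd x) (abs_nonneg _)
  have hF'cont : Continuous F' := by
    apply Continuous.sub
    · exact (continuous_const.sub (continuous_norm.pow 2)).mul H2.continuous
    · exact (continuous_const.mul (continuous_apply i |>.comp (EuclideanSpace.equiv (Fin d) ℝ).continuous)).mul H1.continuous
  have hIF' : Integrable F' := by
    apply Integrable.mono' (((ha H2).add (ha H1)).const_mul 2) hF'cont.aestronglyMeasurable
    filter_upwards with x
    rw [Real.norm_eq_abs, hF'def]
    have h1 : |(1 - ‖x‖^2) * H2 x - 2 * x i * H1 x|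
        ≤ |1 - ‖x‖^2| * |H2 x| + 2 * |x i| * |H1 x| := by
      refine le_trans (abs_sub _ _) ?_
      rw [abs_mul, abs_mul, abs_mul]
      simp [abs_of_nonneg]
    refine le_trans h1 ?_
    have h2 : 2*|x i| ≤ 1 + ‖x‖^2 := by nlinarith [abs_coord_le i x, sq_nonneg (‖x‖-1), abs_nonneg (x i)]
    have := mul_le_mul_of_nonneg_right (hwbd x) (abs_nonneg (H2 x))
    have := mul_le_mul_of_nonneg_right h2 (abs_nonneg (H1 x))
    simp only [Real.norm_eq_abs, Pi.add_apply]
    nlinarith [abs_nonneg (H1 x), abs_nonneg (H2 x), sq_nonneg ‖x‖]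
  have hcoord : Continuous fun x : Ed d => x i :=
    (continuous_apply i).comp (EuclideanSpace.equiv (Fin d) ℝ).continuous
  have hpsi'cont : ∀ t : ℝ, t ≠ 0 → Continuous fun x : Ed d => psi' t x * x i := by
    intro t ht
    apply Continuous.mul _ hcoord
    exact (continuous_const.div ((continuous_uu.add continuous_const).pow 2)
      (fun x => pow_ne_zero 2 (denom_pos ht x).ne')).mul
      (continuous_const.mul continuous_phi)
  -- integration by parts for each t ≠ 0
  have step : ∀ t : ℝ, t ≠ 0 →
      ∫ x : Ed d, psi t x * F' x = - ∫ x : Ed d, (psi' t x * x i) * F x := by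
    intro t ht
    have hpsid : Differentiable ℝ (psi (d := d) t) :=
      fun x => (hasFDerivAt_psi ht x).differentiableAt
    have hpsifd : ∀ x : Ed d, fderiv ℝ (psi t) x e = psi' t x * x i := by
      intro x; rw [(hasFDerivAt_psi ht x).fderiv]
      rw [ContinuousLinearMap.smul_apply, hinner x, smul_eq_mul]
    have hbd1 : ∀ x : Ed d, ‖psi t x‖ ≤ 1 := by
      intro x; rw [Real.norm_eq_abs, abs_of_nonneg (psi_nonneg ht x)]; exact psi_le_one ht x
    have h1 : Integrable (fun x : Ed d => fderiv ℝ (psi t) x e * F x) := by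
      simp only [hpsifd]
      exact hIF.bdd_mul (hpsi'cont t ht).aestronglyMeasurable
        (c := 4/t^2) (Filter.Eventually.of_forall fun x => by rw [Real.norm_eq_abs]; exact psi'_bound1 ht x i)
    have h2 : Integrable (fun x : Ed d => psi t x * fderiv ℝ F x e) := by
      simp only [hF'val]
      exact hIF'.bdd_mul (continuous_psi ht).aestronglyMeasurable (c := 1) (Filter.Eventually.of_forall hbd1)
    have h3 : Integrable (fun x : Ed d => psi t x * F x) :=
      hIF.bdd_mul (continuous_psi ht).aestronglyMeasurable (c := 1) (Filter.Eventually.of_forall hbd1)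
    have A := integral_mul_fderiv_eq_neg_fderiv_mul_of_integrable
      (f := psi t) (g := F) (v := e) h1 h2 h3 (fun x _ => hpsid x) (fun x _ => hFdiff x)
    simp only [hF'val, hpsifd] at A
    exact A
  set tn : ℕ → ℝ := fun n => 1/(n+1) with htn
  have htn0 : ∀ n : ℕ, tn n ≠ 0 := fun n => by positivity
  have htlim : Tendsto tn atTop (𝓝 0) := tendsto_one_div_add_atTop_nhds_zero_nat
  have lim1 : Tendsto (fun n => ∫ x : Ed d, psi (tn n) x * F' x) atTop
      (𝓝 (∫ x : Ed d, (Metric.ball (0 : Ed d) 1).indicator (fun _ => (1:ℝ)) x * F' x)) := by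
    apply tendsto_integral_of_dominated_convergence (bound := fun x => ‖F' x‖)
    · exact fun n => ((continuous_psi (htn0 n)).mul hF'cont).aestronglyMeasurable
    · exact hIF'.norm
    · intro n
      filter_upwards with x
      rw [norm_mul]
      calc ‖psi (tn n) x‖ * ‖F' x‖ ≤ 1 * ‖F' x‖ := by
            apply mul_le_mul_of_nonneg_right _ (norm_nonneg _)
            rw [Real.norm_eq_abs, abs_of_nonneg (psi_nonneg (htn0 n) x)]
            exact psi_le_one (htn0 n) x
        _ = ‖F' x‖ := one_mul _
    · filter_upwards with x
      rcases lt_or_ge ‖x‖ 1 with hx | hx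
      · have hu : 0 < uu x := by
          rw [uu, phi_eq_of_lt hx.le]
          have : 0 < 1 - ‖x‖^2 := by nlinarith [norm_nonneg x]
          positivity
        have hindx : (Metric.ball (0 : Ed d) 1).indicator (fun _ => (1:ℝ)) x = 1 :=
          Set.indicator_of_mem (mem_ball_zero_iff.2 hx) _
        rw [hindx]
        have hlim : Tendsto (fun n => psi (tn n) x) atTop (𝓝 1) := by
          have h0 : Tendsto (fun n => uu x / (uu x + tn n ^ 2)) atTop
              (𝓝 (uu x / (uu x + 0 ^ 2))) :=
            tendsto_const_nhds.div (tendsto_const_nhds.add (htlim.pow 2))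
              (by simpa using hu.ne')
          simpa [psi, div_self hu.ne'] using h0
        simpa using hlim.mul_const (F' x)
      · have huu : uu x = 0 := by simp [uu, phi_eq_zero hx]
        have hindx : (Metric.ball (0 : Ed d) 1).indicator (fun _ => (1:ℝ)) x = 0 :=
          Set.indicator_of_notMem (by simpa [mem_ball_zero_iff] using not_lt.2 hx) _
        have : ∀ n, psi (tn n) x * F' x = 0 := by
          intro n; simp [psi, huu]
        rw [hindx]
        simp only [this, zero_mul]
        exact tendsto_const_nhds
  have lim2 : Tendsto (fun n => ∫ x : Ed d, (psi' (tn n) x * x i) * F x) atTop (𝓝 0) := by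
    have h0 : (0:ℝ) = ∫ _ : Ed d, (0:ℝ) := by simp
    rw [h0]
    apply tendsto_integral_of_dominated_convergence (bound := fun x => (1+‖x‖^2) * ‖H1 x‖)
    · exact fun n => ((hpsi'cont _ (htn0 n)).mul hFcont).aestronglyMeasurable
    · exact ha H1
    · intro n
      filter_upwards with x
      have hxle : ‖x‖ ≤ 1 + ‖x‖^2 := by nlinarith [sq_nonneg (‖x‖ - 1), norm_nonneg x]
      calc ‖psi' (tn n) x * x i * F x‖
          = (|psi' (tn n) x| * |1 - ‖x‖^2|) * (|x i| * |H1 x|) := by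
            rw [hFeq]
            simp only [Real.norm_eq_abs, abs_mul]
            ring
        _ ≤ 1 * (|x i| * |H1 x|) := by
            apply mul_le_mul_of_nonneg_right (psi'_w_bound (htn0 n) x)
            positivity
        _ = |x i| * |H1 x| := one_mul _
        _ ≤ (1 + ‖x‖^2) * ‖H1 x‖ := by
            rw [Real.norm_eq_abs]
            exact mul_le_mul_of_nonneg_right
              (le_trans (abs_coord_le i x) hxle) (abs_nonneg _)
    · filter_upwards with x
      rcases eq_or_lt_of_le (phi_nonneg x) with hphi | hphi
      · have : ∀ n, psi' (tn n) x * x i * F x = 0 := by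
          intro n; simp [psi', ← hphi]
        simp only [this]
        exact tendsto_const_nhds
      · have hu : 0 < uu x := by rw [uu]; positivity
        have h1 : Tendsto (fun n => psi' (tn n) x) atTop (𝓝 0) := by
          have h2 : Tendsto (fun n => tn n ^ 2 / (uu x + tn n ^ 2)^2) atTop
              (𝓝 (0^2 / (uu x + 0^2)^2)) :=
            (htlim.pow 2).div ((tendsto_const_nhds.add (htlim.pow 2)).pow 2)
              (by simpa using pow_ne_zero 2 hu.ne')
          have h3 := h2.mul_const (-4 * phi x)
          simpa [psi'] using h3
        simpa using (h1.mul_const (x i)).mul_const (F x)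
  have main : ∫ x : Ed d,
      (Metric.ball (0 : Ed d) 1).indicator (fun _ => (1:ℝ)) x * F' x = 0 := by
    have hfun : (fun n => ∫ x : Ed d, psi (tn n) x * F' x)
        = fun n => - ∫ x : Ed d, (psi' (tn n) x * x i) * F x :=
      funext fun n => step _ (htn0 n)
    have h3 : Tendsto (fun n => ∫ x : Ed d, psi (tn n) x * F' x) atTop (𝓝 (-0)) := by
      rw [hfun]; exact lim2.neg
    have := tendsto_nhds_unique lim1 h3
    simpa using this
  have hindmeas : AEStronglyMeasurable
      ((Metric.ball (0 : Ed d) 1).indicator (fun _ => (1:ℝ))) volume :=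
    (Measurable.indicator measurable_const measurableSet_ball).aestronglyMeasurable
  have hindbd : ∀ x : Ed d, ‖(Metric.ball (0 : Ed d) 1).indicator (fun _ => (1:ℝ)) x‖ ≤ 1 := by
    intro x
    by_cases hx : x ∈ Metric.ball (0 : Ed d) 1 <;> simp [hx]
  constructor
  · simp only [hF'val]
    exact hIF'.bdd_mul hindmeas (c := 1) (Filter.Eventually.of_forall hindbd)
  · simp only [hF'val]
    exact main

end LegendreAux

/-- The distributional Legendre operator annihilates the indicator of the unit ball,
so the entropy lower bound S ≥ 2πD‖f‖²_B is attained: S = 2πD·Vol(B), D = (d-1)/2. -/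
theorem legendre_indicator_ball_zero (d : ℕ) :
    (∀ g : SchwartzMap (Ed d) ℝ,
        ∫ x : Ed d, (Metric.ball (0 : Ed d) 1).indicator (fun _ => (1 : ℝ)) x *
          legendreR (⇑g) x = 0) ∧
    -Real.pi * 0 + 2 * Real.pi * (((d : ℝ) - 1) / 2) *
        ∫ x in Metric.ball (0 : Ed d) 1,
          ((Metric.ball (0 : Ed d) 1).indicator (fun _ => (1 : ℝ)) x) ^ 2 =
      2 * Real.pi * (((d : ℝ) - 1) / 2) * (volume (Metric.ball (0 : Ed d) 1)).toReal := by
  constructor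
  · intro g
    have h1 : (fun x : Ed d => (Metric.ball (0 : Ed d) 1).indicator (fun _ => (1 : ℝ)) x *
        legendreR (⇑g) x)
        = fun x : Ed d => ∑ i : Fin d,
            (Metric.ball (0 : Ed d) 1).indicator (fun _ => (1 : ℝ)) x *
            fderiv ℝ (fun y => (1 - ‖y‖ ^ 2) * fderiv ℝ (⇑g) y (EuclideanSpace.single i 1)) x
              (EuclideanSpace.single i 1) := by
      funext x
      rw [legendreR, Finset.mul_sum]
      rfl
    rw [h1, integral_finset_sum _ (fun i _ => (key g i).1)]
    exact Finset.sum_eq_zero fun i _ => (key g i).2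
  · have hvol : ∫ x in Metric.ball (0 : Ed d) 1,
        ((Metric.ball (0 : Ed d) 1).indicator (fun _ => (1 : ℝ)) x) ^ 2
        = (volume (Metric.ball (0 : Ed d) 1)).toReal := by
      rw [setIntegral_congr_fun measurableSet_ball
        (g := fun _ : Ed d => (1 : ℝ)) (fun x hx => by simp [Set.indicator_of_mem hx])]
      simp
      rfl
    rw [hvol]
    ring
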